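/- Let a_1, …, a_N be nonzero complex numbers and let F_1, …, F_N : (0,∞) → ℂ be measurable with |F_j(p)| ≤ C(1+p)^m. Define c_k = ∑_{j=1}^N a_j^{-k} ∫₀^∞ e^{-kp} F_j(p) dp for k ≥ 1. Then the power series ∑_{k≥1} c_k z^k has radius of convergence at least min_j |a_j|, and for |z| < min_j |a_j|, ∑_{k=1}^∞ c_k z^k = z ∑_{j=1}^N ∫₀^∞ F_j(ln(1+s)) / ((1+s)(a_j(1+s) − z)) ds. -/

import Mathlib

open MeasureTheory Set Real

/-! With `q(p) = (z / a) e^{-p}` one has `a^{-k} ∫ e^{-kp} F(p) dp · z^k = ∫ q(p)^k F(p) dp`, and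
`‖q‖ ≤ ‖z‖ / ‖a‖ < 1` on `p > 0`. The polynomial bound makes `e^{-p} F` integrable, which
dominates every term, so the geometric series may be summed under the integral:
`∑ₖ ∫ q^k F = ∫ q / (1 - q) F = z ∫ F(p) / (a e^p - z) dp`. The substitution `p = log (1 + s)`
turns this into the stated integral. -/

lemma one_add_pow_le_mul_exp_half (m : ℕ) {p : ℝ} (hp : 0 ≤ 1 + p) :
    (1 + p) ^ m ≤ 2 ^ m * m.factorial * rexp ((1 + p) / 2) := by
  have h := pow_div_factorial_le_exp _ (div_nonneg hp zero_le_two) m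
  rw [div_pow, div_div, div_le_iff₀ (by positivity)] at h
  linarith

lemma integrableOn_one_add_pow_mul_exp_neg (m : ℕ) :
    IntegrableOn (fun p : ℝ => (1 + p) ^ m * rexp (-p)) (Ioi 0) := by
  refine ((exp_neg_integrableOn_Ioi 0 (b := 1 / 2) one_half_pos).const_mul
    (2 ^ m * m.factorial * rexp (1 / 2))).mono'
    (Continuous.aestronglyMeasurable (by fun_prop)) ?_
  refine (ae_restrict_iff' measurableSet_Ioi).2 (ae_of_all _ fun p (hp : 0 < p) => ?_)
  rw [Real.norm_of_nonneg (by positivity)]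
  calc (1 + p) ^ m * rexp (-p)
      ≤ 2 ^ m * m.factorial * rexp ((1 + p) / 2) * rexp (-p) := by
        gcongr
        exact one_add_pow_le_mul_exp_half m (by linarith)
    _ = 2 ^ m * m.factorial * rexp (1 / 2) * rexp (-(1 / 2) * p) := by
        rw [mul_assoc (_ * _) (rexp (1 / 2)), mul_assoc (_ * _) (rexp ((1 + p) / 2)),
          ← Real.exp_add, ← Real.exp_add]
        ring_nf

lemma integrableOn_cexp_neg_mul_of_norm_le_one_add_pow {F : ℝ → ℂ}
    (hF : AEStronglyMeasurable F (volume.restrict (Ioi 0))) {C : ℝ} {m : ℕ}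
    (hbound : ∀ p > 0, ‖F p‖ ≤ C * (1 + p) ^ m) :
    IntegrableOn (fun p : ℝ => Complex.exp (-p) * F p) (Ioi 0) := by
  refine ((integrableOn_one_add_pow_mul_exp_neg m).const_mul C).mono'
    ((Continuous.aestronglyMeasurable (by fun_prop)).mul hF) ?_
  refine (ae_restrict_iff' measurableSet_Ioi).2 (ae_of_all _ fun p hp => ?_)
  rw [norm_mul, ← Complex.ofReal_neg, Complex.norm_exp_ofReal]
  calc rexp (-p) * ‖F p‖ ≤ rexp (-p) * (C * (1 + p) ^ m) := by gcongr; exact hbound p hp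
    _ = C * ((1 + p) ^ m * rexp (-p)) := by ring

lemma integral_Ioi_eq_integral_comp_log_one_add {E : Type*} [NormedAddCommGroup E]
    [NormedSpace ℝ E] (f : ℝ → E) :
    ∫ p in Ioi (0 : ℝ), f p = ∫ s in Ioi (0 : ℝ), (1 + s)⁻¹ • f (Real.log (1 + s)) := by
  have himage : (fun s : ℝ => Real.log (1 + s)) '' Ioi 0 = Ioi 0 := by
    rw [show (fun s : ℝ => Real.log (1 + s)) = Real.log ∘ (1 + ·) from rfl, image_comp,
      image_const_add_Ioi, add_zero, image_log_Ioi one_pos, Real.log_one]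
  have hderiv : ∀ s ∈ Ioi (0 : ℝ),
      HasDerivWithinAt (fun s : ℝ => Real.log (1 + s)) (1 + s)⁻¹ (Ioi 0) s := by
    intro s (hs : 0 < s)
    simpa [one_div] using
      (((hasDerivAt_id' s).const_add 1).log (by linarith)).hasDerivWithinAt
  have hmono : MonotoneOn (fun s : ℝ => Real.log (1 + s)) (Ioi 0) :=
    fun x (hx : 0 < x) y _ hxy => Real.log_le_log (by linarith) (by linarith)
  rw [← integral_image_eq_integral_deriv_smul_of_monotoneOn measurableSet_Ioi hderiv hmono,
    himage]

lemma hasSum_integral_pow_succ_mul {α : Type*} [MeasurableSpace α] {μ : Measure α}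
    {q F : α → ℂ} {r : ℝ} (hr₀ : 0 ≤ r) (hr : r < 1) (hq : AEStronglyMeasurable q μ)
    (hqr : ∀ᵐ x ∂μ, ‖q x‖ ≤ r) (hqF : Integrable (fun x => q x * F x) μ) :
    HasSum (fun k : ℕ => ∫ x, q x ^ (k + 1) * F x ∂μ) (∫ x, q x / (1 - q x) * F x ∂μ) := by
  have hsplit : ∀ (k : ℕ) (x : α), q x ^ (k + 1) * F x = q x ^ k * (q x * F x) :=
    fun k x => by ring
  have hint : ∀ k : ℕ, Integrable (fun x => q x ^ (k + 1) * F x) μ := fun k => by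
    simp_rw [hsplit]
    exact hqF.bdd_mul (hq.pow k) (hqr.mono fun x hx => by
      rw [norm_pow]; exact pow_le_pow_left₀ (norm_nonneg _) hx k)
  have hnorm : ∀ k : ℕ, ∫ x, ‖q x ^ (k + 1) * F x‖ ∂μ ≤ r ^ k * ∫ x, ‖q x * F x‖ ∂μ := by
    intro k
    rw [← integral_const_mul (r ^ k)]
    refine integral_mono_ae (hint k).norm (hqF.norm.const_mul _) ?_
    filter_upwards [hqr] with x hx
    rw [hsplit, norm_mul, norm_pow]
    gcongr
  have hsum : Summable fun k : ℕ => ∫ x, ‖q x ^ (k + 1) * F x‖ ∂μ :=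
    Summable.of_nonneg_of_le (fun k => integral_nonneg fun x => norm_nonneg _) hnorm
      ((summable_geometric_of_lt_one hr₀ hr).mul_right _)
  have hgeom : ∀ᵐ x ∂μ, ∑' k : ℕ, q x ^ (k + 1) * F x = q x / (1 - q x) * F x := by
    filter_upwards [hqr] with x hx
    simp only [hsplit]
    rw [tsum_mul_right, tsum_geometric_of_norm_lt_one (hx.trans_lt hr)]
    ring
  rw [← integral_congr_ae hgeom]
  exact hasSum_integral_of_summable_integral_norm hint hsum

lemma integral_Ioi_geometric_kernel_mul {a z : ℂ} (hz : ‖z‖ < ‖a‖) (F : ℝ → ℂ) :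
    ∫ p in Ioi (0 : ℝ), z / a * Complex.exp (-p) / (1 - z / a * Complex.exp (-p)) * F p
      = z * ∫ s in Ioi (0 : ℝ), F (Real.log (1 + s)) /
          (((1 + s : ℝ) : ℂ) * (a * ((1 + s : ℝ) : ℂ) - z)) := by
  have ha : a ≠ 0 := norm_pos_iff.1 ((norm_nonneg z).trans_lt hz)
  rw [integral_Ioi_eq_integral_comp_log_one_add, ← integral_const_mul]
  refine setIntegral_congr_fun measurableSet_Ioi fun s (hs : 0 < s) => ?_
  have hexp : Complex.exp (-(Real.log (1 + s) : ℂ)) = ((1 + s : ℝ) : ℂ)⁻¹ := by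
    rw [Complex.exp_neg, ← Complex.ofReal_exp, Real.exp_log (by linarith)]
  have hu : ((1 + s : ℝ) : ℂ) ≠ 0 := by exact_mod_cast (by linarith : 1 + s ≠ 0)
  have hden : a * ((1 + s : ℝ) : ℂ) - z ≠ 0 := by
    refine sub_ne_zero.2 fun h => hz.not_ge ?_
    rw [← h, norm_mul, Complex.norm_of_nonneg (by linarith)]
    exact le_mul_of_one_le_right (norm_nonneg a) (by linarith)
  simp only [hexp, Complex.real_smul, Complex.ofReal_inv]
  field_simp

lemma hasSum_laplace_coeff_mul_pow {a z : ℂ} (hz : ‖z‖ < ‖a‖) {F : ℝ → ℂ}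
    (hF : IntegrableOn (fun p : ℝ => Complex.exp (-p) * F p) (Ioi 0)) :
    HasSum (fun k : ℕ => a ^ (-((k + 1 : ℕ) : ℤ)) *
        (∫ p in Ioi (0 : ℝ), Complex.exp (-((k + 1 : ℕ) : ℂ) * p) * F p) * z ^ (k + 1))
      (z * ∫ s in Ioi (0 : ℝ), F (Real.log (1 + s)) /
          (((1 + s : ℝ) : ℂ) * (a * ((1 + s : ℝ) : ℂ) - z))) := by
  have hq : ∀ᵐ p ∂(volume.restrict (Ioi 0)), ‖z / a * Complex.exp (-(p : ℝ))‖ ≤ ‖z‖ / ‖a‖ :=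
    (ae_restrict_iff' measurableSet_Ioi).2 (ae_of_all _ fun p (hp : 0 < p) => by
      rw [norm_mul, norm_div, ← Complex.ofReal_neg, Complex.norm_exp_ofReal]
      exact mul_le_of_le_one_right (by positivity) (Real.exp_le_one_iff.2 (by linarith)))
  have hqF :
      Integrable (fun p : ℝ => z / a * Complex.exp (-p) * F p) (volume.restrict (Ioi 0)) := by
    simpa only [mul_assoc] using hF.const_mul (z / a)
  rw [← integral_Ioi_geometric_kernel_mul hz]
  convert hasSum_integral_pow_succ_mul (by positivity)
    ((div_lt_one ((norm_nonneg z).trans_lt hz)).2 hz)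
    (Continuous.aestronglyMeasurable (by fun_prop)) hq hqF using 2 with k
  have hpow : ∀ p : ℝ, (z / a * Complex.exp (-p)) ^ (k + 1) * F p
      = (z / a) ^ (k + 1) * (Complex.exp (-((k + 1 : ℕ) : ℂ) * p) * F p) := by
    intro p
    rw [mul_pow, ← Complex.exp_nat_mul]
    ring_nf
  simp_rw [hpow]
  rw [integral_const_mul, zpow_neg, zpow_natCast, div_pow]
  ring

theorem stmt18_general (N : ℕ) (a : Fin N → ℂ)
    (F : Fin N → ℝ → ℂ) (hFm : ∀ j, Measurable (F j))
    (C : ℝ) (m : ℕ) (hbound : ∀ j, ∀ p > 0, ‖F j p‖ ≤ C * (1 + p) ^ m)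
    (c : ℕ → ℂ)
    (hc : ∀ k : ℕ, 1 ≤ k → c k = ∑ j, (a j) ^ (-(k : ℤ)) *
      ∫ p in Ioi (0 : ℝ), Complex.exp (-(k : ℂ) * p) * F j p)
    (z : ℂ) (hz : ∀ j, ‖z‖ < ‖a j‖) :
    Summable (fun k : ℕ => c (k + 1) * z ^ (k + 1)) ∧
    ∑' k : ℕ, c (k + 1) * z ^ (k + 1) =
      z * ∑ j, ∫ s in Ioi (0 : ℝ),
        F j (Real.log (1 + s)) /
          (((1 + s : ℝ) : ℂ) * (a j * ((1 + s : ℝ) : ℂ) - z)) := by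
  have hsum : HasSum (fun k : ℕ => c (k + 1) * z ^ (k + 1)) (z * ∑ j, ∫ s in Ioi (0 : ℝ),
      F j (Real.log (1 + s)) / (((1 + s : ℝ) : ℂ) * (a j * ((1 + s : ℝ) : ℂ) - z))) := by
    rw [Finset.mul_sum]
    convert hasSum_sum fun j _ => hasSum_laplace_coeff_mul_pow (hz j)
      (integrableOn_cexp_neg_mul_of_norm_le_one_add_pow (hFm j).aestronglyMeasurable
        (hbound j)) using 1
    ext k
    rw [hc (k + 1) le_add_self, Finset.sum_mul]
  exact ⟨hsum.summable, hsum.tsum_eq⟩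

theorem stmt18 (N : ℕ) (hN : 1 ≤ N) (a : Fin N → ℂ) (ha : ∀ j, a j ≠ 0)
    (F : Fin N → ℝ → ℂ) (hFm : ∀ j, Measurable (F j))
    (C : ℝ) (m : ℕ) (hbound : ∀ j, ∀ p > 0, ‖F j p‖ ≤ C * (1 + p) ^ m)
    (c : ℕ → ℂ)
    (hc : ∀ k : ℕ, 1 ≤ k → c k = ∑ j, (a j) ^ (-(k : ℤ)) *
      ∫ p in Ioi (0 : ℝ), Complex.exp (-(k : ℂ) * p) * F j p)
    (z : ℂ) (hz : ∀ j, ‖z‖ < ‖a j‖) :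
    Summable (fun k : ℕ => c (k + 1) * z ^ (k + 1)) ∧
    ∑' k : ℕ, c (k + 1) * z ^ (k + 1) =
      z * ∑ j, ∫ s in Ioi (0 : ℝ),
        F j (Real.log (1 + s)) /
          (((1 + s : ℝ) : ℂ) * (a j * ((1 + s : ℝ) : ℂ) - z)) :=
  stmt18_general N a F hFm C m hbound c hc z hz
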